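/- With π = a + bτ a prime of Z[τ] of norm q (a rational prime ≡ ±1 mod 5, q ≠ 11), the quadratic characters of δ = −(2+5τ) modulo π and modulo the conjugate prime π' are opposite if and only if q is a quadratic nonresidue modulo 11; precisely, (δ | π)·(δ | π') = (−11 | q) = (q | 11). -/

import Mathlib

noncomputable def tau : ℝ := (1 + Real.sqrt 5) / 2

noncomputable def Ztau : Subring ℝ := Subring.closure {tau}

noncomputable def tauZ : Ztau := ⟨tau, Subring.subset_closure (Set.mem_singleton tau)⟩

lemma tau_sq : tau ^ 2 = tau + 1 := by
  unfold tau
  have h5 : Real.sqrt 5 ^ 2 = 5 := Real.sq_sqrt (by norm_num)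
  nlinarith [h5]

lemma tau_irrational : Irrational tau := by
  have h5 : Irrational (Real.sqrt 5) := by
    have : ((5:ℕ):ℝ) = (5:ℝ) := by norm_num
    exact this ▸ (by norm_num : Nat.Prime 5).irrational_sqrt
  have := (h5.intCast_add 1).div_intCast (m := 2) (by norm_num)
  simpa [tau] using this

lemma rep_exists' {r : ℝ} (hr : r ∈ Subring.closure {tau}) : ∃ m n : ℤ, r = m + n * tau := by
  induction hr using Subring.closure_induction with
  | mem x hx =>
      rw [Set.eq_of_mem_singleton hx]
      exact ⟨0, 1, by push_cast; ring⟩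
  | zero => exact ⟨0, 0, by push_cast; ring⟩
  | one => exact ⟨1, 0, by push_cast; ring⟩
  | add x y hx hy ihx ihy =>
      obtain ⟨m, n, h1⟩ := ihx; obtain ⟨m', n', h2⟩ := ihy
      exact ⟨m + m', n + n', by rw [h1, h2]; push_cast; ring⟩
  | neg x hx ihx =>
      obtain ⟨m, n, h1⟩ := ihx
      exact ⟨-m, -n, by rw [h1]; push_cast; ring⟩
  | mul x y hx hy ihx ihy =>
      obtain ⟨m, n, h1⟩ := ihx; obtain ⟨m', n', h2⟩ := ihy
      refine ⟨m * m' + n * n', m * n' + n * m' + n * n', ?_⟩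
      rw [h1, h2]
      push_cast
      linear_combination (n : ℝ) * n' * tau_sq

lemma rep_exists (x : Ztau) : ∃ m n : ℤ, (x : ℝ) = m + n * tau := rep_exists' x.2

lemma rep_unique {m n : ℤ} (h : (m : ℝ) + n * tau = 0) : m = 0 ∧ n = 0 := by
  by_cases hn : n = 0
  · subst hn; simp at h; exact ⟨by exact_mod_cast h, rfl⟩
  · exfalso
    apply tau_irrational
    have hn' : (n : ℝ) ≠ 0 := Int.cast_ne_zero.mpr hn
    refine ⟨(-m : ℚ) / (n : ℚ), ?_⟩
    push_cast
    field_simp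
    linarith [h]
lemma tauZ_sq : tauZ * tauZ = tauZ + 1 := by
  apply Subtype.ext
  push_cast [tauZ]
  linear_combination tau_sq

lemma Ztau_norm_prod (x y : ℤ) :
    ((x : Ztau) + (y : Ztau) * tauZ) * (((x + y : ℤ) : Ztau) - (y : Ztau) * tauZ)
      = ((x ^ 2 + x * y - y ^ 2 : ℤ) : Ztau) := by
  push_cast
  linear_combination (-(y : Ztau) ^ 2) * tauZ_sq

lemma Ztau_norm_unit {x y : ℤ} (h : IsUnit ((x : Ztau) + (y : Ztau) * tauZ)) :
    IsUnit (x ^ 2 + x * y - y ^ 2) := by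
  obtain ⟨u, hu⟩ := h
  obtain ⟨γ, hγ⟩ : ∃ γ : Ztau, ((x : Ztau) + (y : Ztau) * tauZ) * γ = 1 :=
    ⟨(u⁻¹ : Ztauˣ), by rw [← hu]; exact u.mul_inv⟩
  obtain ⟨m, n, hmn⟩ := rep_exists γ
  -- real equation
  have hre : ((x : ℝ) + y * tau) * ((m : ℝ) + n * tau) = 1 := by
    have := congrArg (Subtype.val) hγ
    push_cast at this
    rw [hmn] at this
    convert this using 2 <;> simp [tauZ]
  -- expand using tau_sq : ((x*m + y*n - 1) : ℝ) + (x*n + y*m + y*n) * tau = 0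
  have hexp : (((x*m + y*n - 1 : ℤ)) : ℝ) + ((x*n + y*m + y*n : ℤ) : ℝ) * tau = 0 := by
    push_cast
    linear_combination hre - (y : ℝ) * n * tau_sq
  obtain ⟨hC, hD⟩ := rep_unique hexp
  have hC' : x*m + y*n = 1 := by omega
  have hD' : x*n + y*m + y*n = 0 := hD
  refine IsUnit.of_mul_eq_one (m ^ 2 + m * n - n ^ 2) ?_
  linear_combination (x*m + y*n + 1) * hC'
    + (x*m + y*n - (x*n + y*m + y*n)) * hD'
lemma q_not_dvd_y {x y : ℤ} {q : ℕ} (hq : q.Prime) (hN : x ^ 2 + x * y - y ^ 2 = (q : ℤ)) :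
    ¬ (q : ℤ) ∣ y := by
  intro hdy
  have hqZ : Prime (q : ℤ) := Nat.prime_iff_prime_int.mp hq
  have hdx : (q : ℤ) ∣ x := by
    apply hqZ.dvd_of_dvd_pow (n := 2)
    have : x ^ 2 = (q : ℤ) + y * y - x * y := by linarith [hN, sq y]
    rw [this]
    exact dvd_sub (dvd_add dvd_rfl (hdy.mul_left y)) (hdy.mul_left x)
  obtain ⟨x₁, rfl⟩ := hdx
  obtain ⟨y₁, rfl⟩ := hdy
  have hq0 : (q : ℤ) ≠ 0 := by exact_mod_cast hq.ne_zero
  have hmm : (q : ℤ) * (q * x₁ ^ 2 + q * x₁ * y₁ - q * y₁ ^ 2 - 1) = 0 := by ring_nf; ring_nf at hN; linarith [hN]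
  have h1 : (q : ℤ) * x₁ ^ 2 + q * x₁ * y₁ - q * y₁ ^ 2 = 1 := by
    rcases mul_eq_zero.mp hmm with h | h
    · exact absurd h hq0
    · linarith
  have hd1 : (q : ℤ) ∣ 1 := ⟨x₁ ^ 2 + x₁ * y₁ - y₁ ^ 2, by linarith [h1]⟩
  have := Int.le_of_dvd one_pos hd1
  have := hq.one_lt
  omega

set_option maxHeartbeats 1600000 in
set_option synthInstance.maxHeartbeats 1000000 in
lemma main_aux (x y : ℤ) (q : ℕ) [hqF : Fact q.Prime]
    (hN : x ^ 2 + x * y - y ^ 2 = (q : ℤ))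
    (hnu : ¬ IsUnit ((x : Ztau) + (y : Ztau) * tauZ)) :
    (IsSquare (Ideal.Quotient.mk (Ideal.span {(x : Ztau) + (y : Ztau) * tauZ})
        (-(2 + 5 * tauZ))) ↔
      IsSquare (((5 * x - 2 * y : ℤ) : ZMod q) * ((y : ℤ) : ZMod q)⁻¹)) := by
  have hq := hqF.out
  set I : Ideal Ztau := Ideal.span {(x : Ztau) + (y : Ztau) * tauZ} with hIdef
  have hItop : I ≠ ⊤ := by
    rw [hIdef, Ne, Ideal.span_singleton_eq_top]
    exact hnu
  haveI : Nontrivial (Ztau ⧸ I) := Ideal.Quotient.nontrivial_iff.mpr hItop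
  have hmkπ : Ideal.Quotient.mk I ((x : Ztau) + (y : Ztau) * tauZ) = 0 :=
    (Ideal.Quotient.eq_zero_iff_mem).mpr (Ideal.subset_span rfl)
  -- q = 0 in the quotient
  have hq0 : ((q : ℕ) : Ztau ⧸ I) = 0 := by
    have hp := Ztau_norm_prod x y
    have h2 : Ideal.Quotient.mk I ((x ^ 2 + x * y - y ^ 2 : ℤ) : Ztau) = 0 := by
      rw [← hp, map_mul, hmkπ, zero_mul]
    rw [hN] at h2
    rw [show (((q : ℤ) : Ztau)) = (((q : ℕ) : Ztau)) by push_cast; ring] at h2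
    rwa [map_natCast] at h2
  -- characteristic q
  have hchar : ringChar (Ztau ⧸ I) = q := by
    have hdvd : ringChar (Ztau ⧸ I) ∣ q := ringChar.dvd hq0
    rcases (Nat.Prime.eq_one_or_self_of_dvd hq _ hdvd) with h1 | h1
    · exact absurd h1 CharP.ringChar_ne_one
    · exact h1
  haveI : CharP (Ztau ⧸ I) q := hchar ▸ ringChar.charP (Ztau ⧸ I)
  set g : ZMod q →+* Ztau ⧸ I := ZMod.castHom dvd_rfl (Ztau ⧸ I) with hgdef
  have hginj : Function.Injective g := g.injective
  -- y is invertible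
  have hy : ¬ (q : ℤ) ∣ y := q_not_dvd_y hq hN
  have hyZ : ((y : ℤ) : ZMod q) ≠ 0 := by
    rwa [Ne, ZMod.intCast_zmod_eq_zero_iff_dvd]
  obtain ⟨u, v, huv⟩ : IsCoprime (q : ℤ) y :=
    (Nat.prime_iff_prime_int.mp hq).coprime_iff_not_dvd.mpr hy
  -- cancellation by y in the quotient
  have hyunit : ((v : ℤ) : Ztau ⧸ I) * ((y : ℤ) : Ztau ⧸ I) = 1 := by
    have h3 := congrArg (fun z : ℤ => (z : Ztau ⧸ I)) huv
    simp only [Int.cast_add, Int.cast_mul, Int.cast_one, Int.cast_natCast] at h3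
    rw [hq0] at h3
    rw [show ((v : ℤ) : Ztau ⧸ I) * ((y : ℤ) : Ztau ⧸ I) = (v : Ztau ⧸ I) * (y : Ztau ⧸ I) from rfl]
    rw [← h3]; ring
  have hcancel : ∀ z w : Ztau ⧸ I,
      ((y : ℤ) : Ztau ⧸ I) * z = ((y : ℤ) : Ztau ⧸ I) * w → z = w := by
    intro z w h
    have h4 := congrArg (fun s => ((v : ℤ) : Ztau ⧸ I) * s) h
    simpa only [← mul_assoc, hyunit, one_mul] using h4
  -- mk tauZ = g t
  obtain ⟨t, htdef⟩ : ∃ t : ZMod q, t = ((-x : ℤ) : ZMod q) * ((y : ℤ) : ZMod q)⁻¹ := ⟨_, rfl⟩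
  have hmkτ : Ideal.Quotient.mk I tauZ = g t := by
    apply hcancel
    have hL : ((y : ℤ) : Ztau ⧸ I) * Ideal.Quotient.mk I tauZ = ((-x : ℤ) : Ztau ⧸ I) := by
      have e1 : ((y : ℤ) : Ztau ⧸ I) * Ideal.Quotient.mk I tauZ
          = Ideal.Quotient.mk I ((y : Ztau) * tauZ) := by
        rw [map_mul, map_intCast]
      have e2 : ((y : Ztau) * tauZ) = ((x : Ztau) + (y : Ztau) * tauZ) - (x : Ztau) := by ring
      rw [e1, e2, map_sub, hmkπ, map_intCast, zero_sub, Int.cast_neg]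
    rw [hL]
    have e3 : ((y : ℤ) : Ztau ⧸ I) * g t = g (((y : ℤ) : ZMod q) * t) := by
      rw [map_mul, map_intCast]
    rw [e3, htdef, mul_comm (((-x : ℤ) : ZMod q)) _, ← mul_assoc,
      mul_inv_cancel₀ hyZ, one_mul, map_intCast]
  -- surjectivity of g
  have hgsurj : Function.Surjective g := by
    intro r
    obtain ⟨z, rfl⟩ := Ideal.Quotient.mk_surjective r
    obtain ⟨m, n, hmn⟩ := rep_exists z
    have hz : z = ((m : ℤ) : Ztau) + ((n : ℤ) : Ztau) * tauZ := by
      apply Subtype.ext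
      push_cast [tauZ]
      exact hmn
    refine ⟨((m : ℤ) : ZMod q) + ((n : ℤ) : ZMod q) * t, ?_⟩
    rw [hz, map_add, map_mul, map_add, map_mul, hmkτ, map_intCast, map_intCast,
      map_intCast, map_intCast]
  -- the image of delta
  obtain ⟨d, hddef⟩ : ∃ d : ZMod q, d = ((5 * x - 2 * y : ℤ) : ZMod q) * ((y : ℤ) : ZMod q)⁻¹ := ⟨_, rfl⟩
  have hδ : Ideal.Quotient.mk I (-(2 + 5 * tauZ)) = g d := by
    have h1 : Ideal.Quotient.mk I (-(2 + 5 * tauZ))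
        = -(2 + 5 * Ideal.Quotient.mk I tauZ) := by
      rw [map_neg, map_add, map_mul, map_ofNat, map_ofNat]
    rw [h1, hmkτ]
    have h2 : -(2 + 5 * g t) = g (-(2 + 5 * t)) := by
      rw [map_neg g, map_add g, map_mul g, map_ofNat g, map_ofNat g]
    rw [h2]
    congr 1
    rw [htdef, hddef]
    field_simp
    push_cast
    ring
  rw [hδ, hddef]
  constructor
  · rintro ⟨r, hr⟩
    obtain ⟨s, rfl⟩ := hgsurj r
    exact ⟨s, hginj (by rw [hr, ← map_mul])⟩
  · rintro ⟨s, hs⟩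
    exact ⟨g s, by rw [hs, map_mul]⟩

set_option maxHeartbeats 1600000
set_option synthInstance.maxHeartbeats 1000000

instance : Fact (Nat.Prime 11) := ⟨by norm_num⟩

open scoped Classical in
/-- For a prime `π = a + bτ` of `ℤ[τ]` of norm a rational prime `q ≡ ±1 (mod 5)`,
`q ≠ 11`, the quadratic characters of `δ = −(2 + 5τ)` modulo `π` and modulo the
conjugate prime `π' = (a+b) − bτ` satisfy `(δ|π)·(δ|π') = (q|11)`; in particular
they are opposite iff `q` is a quadratic nonresidue mod `11`. -/
theorem delta_characters_conjugate (a b : ℤ) (q : ℕ) [Fact q.Prime]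
    (h5 : q % 5 = 1 ∨ q % 5 = 4) (hq11 : q ≠ 11)
    (hN : a ^ 2 + a * b - b ^ 2 = (q : ℤ))
    (hπ : Prime ((a : Ztau) + (b : Ztau) * tauZ)) :
    (if IsSquare (Ideal.Quotient.mk (Ideal.span {(a : Ztau) + (b : Ztau) * tauZ})
        (-(2 + 5 * tauZ))) then (1 : ℤ) else -1) *
    (if IsSquare (Ideal.Quotient.mk (Ideal.span {((a + b : ℤ) : Ztau) - (b : Ztau) * tauZ})
        (-(2 + 5 * tauZ))) then (1 : ℤ) else -1) = legendreSym 11 (q : ℤ) := by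
  have hq : q.Prime := Fact.out
  have hq2 : q ≠ 2 := by rintro rfl; omega
  have hqlt := hq.two_le
  -- first factor
  have iff1 := main_aux a b q hN hπ.not_unit
  -- second factor
  have hN2 : (a + b) ^ 2 + (a + b) * (-b) - (-b) ^ 2 = (q : ℤ) := by
    ring_nf; ring_nf at hN; linarith
  have hnu2 : ¬ IsUnit (((a + b : ℤ) : Ztau) + ((-b : ℤ) : Ztau) * tauZ) := by
    intro h
    have h2 := Ztau_norm_unit h
    rw [hN2] at h2
    rcases Int.isUnit_iff.mp h2 with h3 | h3 <;> omega
  have iff2 := main_aux (a + b) (-b) q hN2 hnu2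
  have hrw : ((a + b : ℤ) : Ztau) - (b : Ztau) * tauZ
      = ((a + b : ℤ) : Ztau) + ((-b : ℤ) : Ztau) * tauZ := by push_cast; ring
  rw [hrw, if_congr iff1 rfl rfl, if_congr iff2 rfl rfl]
  -- now a computation in ZMod q
  have hb : ((b : ℤ) : ZMod q) ≠ 0 := by
    rw [Ne, ZMod.intCast_zmod_eq_zero_iff_dvd]
    exact q_not_dvd_y hq hN
  have hZ : ((a : ℤ) : ZMod q) ^ 2 + ((a : ℤ) : ZMod q) * ((b : ℤ) : ZMod q)
      - ((b : ℤ) : ZMod q) ^ 2 = 0 := by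
    have h6 := congrArg (fun z : ℤ => (z : ZMod q)) hN
    push_cast at h6
    rwa [ZMod.natCast_self] at h6
  have hprod : (((5 * a - 2 * b : ℤ) : ZMod q) * ((b : ℤ) : ZMod q)⁻¹)
      * (((5 * (a + b) - 2 * (-b) : ℤ) : ZMod q) * ((-b : ℤ) : ZMod q)⁻¹)
      = ((-11 : ℤ) : ZMod q) := by
    have hb' : ((-b : ℤ) : ZMod q) ≠ 0 := by
      push_cast
      simpa using hb
    field_simp
    push_cast
    linear_combination (25 : ZMod q) * hZ
  have h11 : ((-11 : ℤ) : ZMod q) ≠ 0 := by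
    rw [Ne, ZMod.intCast_zmod_eq_zero_iff_dvd]
    intro hdvd
    have h6 : (q : ℤ) ∣ 11 := (dvd_neg (α := ℤ)).mp hdvd
    have h7 : q ∣ 11 := by exact_mod_cast h6
    exact hq11 ((Nat.prime_dvd_prime_iff_eq hq (by norm_num)).mp h7)
  have hd1 : (((5 * a - 2 * b : ℤ) : ZMod q) * ((b : ℤ) : ZMod q)⁻¹) ≠ 0 := by
    intro h
    rw [h, zero_mul] at hprod
    exact h11 hprod.symm
  have hd2 : (((5 * (a + b) - 2 * (-b) : ℤ) : ZMod q) * ((-b : ℤ) : ZMod q)⁻¹) ≠ 0 := by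
    intro h
    rw [h, mul_zero] at hprod
    exact h11 hprod.symm
  have e1 : (if IsSquare (((5 * a - 2 * b : ℤ) : ZMod q) * ((b : ℤ) : ZMod q)⁻¹)
      then (1 : ℤ) else -1)
      = quadraticChar (ZMod q) (((5 * a - 2 * b : ℤ) : ZMod q) * ((b : ℤ) : ZMod q)⁻¹) := by
    split_ifs with h
    · exact ((quadraticChar_one_iff_isSquare hd1).mpr h).symm
    · exact ((quadraticChar_neg_one_iff_not_isSquare).mpr h).symm
  have e2 : (if IsSquare (((5 * (a + b) - 2 * (-b) : ℤ) : ZMod q) * ((-b : ℤ) : ZMod q)⁻¹)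
      then (1 : ℤ) else -1)
      = quadraticChar (ZMod q)
        (((5 * (a + b) - 2 * (-b) : ℤ) : ZMod q) * ((-b : ℤ) : ZMod q)⁻¹) := by
    split_ifs with h
    · exact ((quadraticChar_one_iff_isSquare hd2).mpr h).symm
    · exact ((quadraticChar_neg_one_iff_not_isSquare).mpr h).symm
  rw [e1, e2, ← map_mul, hprod]
  have hleg : quadraticChar (ZMod q) ((-11 : ℤ) : ZMod q) = legendreSym q (-11) := rfl
  rw [hleg]
  -- quadratic reciprocity
  have hm : legendreSym q (-11) = legendreSym q (-1) * legendreSym q 11 := by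
    rw [show (-11 : ℤ) = -1 * 11 by norm_num, legendreSym.mul]
  have hodd : q % 2 = 1 := hq.eq_two_or_odd.resolve_left hq2
  have h4 : q % 4 = 1 ∨ q % 4 = 3 := by omega
  have hc11 : ((11 : ℕ) : ℤ) = (11 : ℤ) := by norm_num
  rcases h4 with h4 | h4
  · rw [hm, legendreSym.at_neg_one hq2, ZMod.χ₄_nat_one_mod_four h4, one_mul]
    have := legendreSym.quadratic_reciprocity_one_mod_four (p := q) (q := 11) h4 (by norm_num)
    rw [hc11] at this
    exact this.symm
  · rw [hm, legendreSym.at_neg_one hq2, ZMod.χ₄_nat_three_mod_four h4]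
    have := legendreSym.quadratic_reciprocity_three_mod_four (p := q) (q := 11) h4 (by norm_num)
    rw [hc11] at this
    rw [this]
    ring
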